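/- In the setting of the previous statement, the stabilizer in Sp(W) of the Lagrangian L_k = X_k ⊕ X'_{F,n−k} ⊕ τ Y'_{F,n−k} equals (GL(X_k) × Sp(W_{2n−2k,F})^τ) ⋉ N, where N is the unipotent radical of the parabolic P = Stab_{Sp(W)}(X_k), W_{2n−2k,F} = X'_{F,n−k} ⊕ Y'_{F,n−k}, and Sp(W_{2n−2k,F})^τ = c_τ Sp(W_{2n−2k,F}) c_τ^{−1} with c_τ the similitude acting by τ on X and identity on Y. -/

import Mathlib

/-!
A symplectic `g` stabilising `L_k` stabilises `X_k`: because `τ ∉ F`, `X_k` is the largest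
`E`-subspace of `L_k`. Hence `g` also stabilises `X_k^⊥ = X_k ⊕ W`, i.e. `g ∈ P` is block
upper triangular for `V = X_k ⊕ W ⊕ Y_k`. Its block diagonal `m` is symplectic, with inverse
the block diagonal of `g⁻¹`, and `u = m⁻¹ g` fixes `X_k` and acts trivially on `X_k^⊥ / X_k`,
so `u ∈ N`. Since `τ² ∈ Fˣ`, multiplication by `τ` carries `W ∩ L_k` onto `c_τ W_F`; the
middle block of `m` stabilises `W ∩ L_k`, hence `c_τ W_F`.

Conversely `N` moves `L_k ⊆ X_k^⊥` only by vectors of `X_k ⊆ L_k`, and a Levi element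
stabilising `X_k` and `c_τ W_F` stabilises `L_k = X_k ⊕ τ⁻¹ c_τ W_F`; then `g⁻¹` stabilises
`L_k` too, as `L_k` is finite dimensional over `F`.
-/

open Module Set

theorem LinearMap.IsOrthogonal.symm {R M : Type*} [CommRing R] [AddCommGroup M] [Module R M]
    {B : LinearMap.BilinForm R M} {g : M ≃ₗ[R] M} (hg : B.IsOrthogonal g) :
    B.IsOrthogonal g.symm := fun p q => by
  rw [← hg, g.apply_symm_apply, g.apply_symm_apply]

theorem LinearEquiv.mapsTo_symm_of_mapsTo {K M : Type*} [DivisionRing K] [AddCommGroup M]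
    [Module K M] (f : M ≃ₗ[K] M) {N : Submodule K M} [FiniteDimensional K N]
    (h : MapsTo f N N) : MapsTo f.symm N N := by
  have hN : N.map (f : M →ₗ[K] M) = N :=
    Submodule.eq_of_le_of_finrank_eq (Submodule.map_le_iff_le_comap.2 h) (f.finrank_map_eq N)
  intro p hp
  rw [← hN] at hp
  obtain ⟨q, hq, rfl⟩ := hp
  simpa using hq

section QuadraticExtension

variable {F E : Type*} [Field F] [Field E] [Algebra F E] {τ : E}

theorem ne_algebraMap_of_trace_eq_zero [CharZero F] (hquad : finrank F E = 2) (hτ : τ ≠ 0)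
    (htr : Algebra.trace F E τ = 0) (a : F) : τ ≠ algebraMap F E a := by
  rintro rfl
  rw [Algebra.trace_algebraMap, hquad, two_nsmul, ← two_mul, mul_eq_zero] at htr
  simp_all

theorem eq_zero_of_mul_algebraMap_eq_algebraMap [CharZero F] (hquad : finrank F E = 2)
    (hτ : τ ≠ 0) (htr : Algebra.trace F E τ = 0) {a b : F}
    (h : τ * algebraMap F E a = algebraMap F E b) : a = 0 := by
  by_contra ha
  refine ne_algebraMap_of_trace_eq_zero hquad hτ htr (b / a) ?_
  rw [map_div₀, ← h, mul_div_cancel_right₀ _ ((map_ne_zero _).mpr ha)]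

theorem exists_sq_eq_algebraMap_of_trace_eq_zero (hquad : finrank F E = 2)
    (htr : Algebra.trace F E τ = 0) : ∃ d : F, τ ^ 2 = algebraMap F E d := by
  have : FiniteDimensional F E := .of_finrank_eq_succ hquad
  let b : Basis (Fin 2) F E := (finBasis F E).reindex (finCongr hquad)
  set M := Algebra.leftMulMatrix b τ
  have hM : M.trace = 0 := by rw [← Algebra.trace_eq_matrix_trace, htr]
  refine ⟨-M.det, Algebra.leftMulMatrix_injective b ?_⟩
  have hCH := M.aeval_self_charpoly
  rw [M.charpoly_fin_two, hM] at hCH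
  simpa [Algebra.algebraMap_eq_smul_one, add_eq_zero_iff_eq_neg] using hCH

theorem exists_mul_eq_algebraMap_iff (hquad : finrank F E = 2) (hτ : τ ≠ 0)
    (htr : Algebra.trace F E τ = 0) {y : E} :
    (∃ b : F, τ * y = algebraMap F E b) ↔ ∃ c : F, y = τ * algebraMap F E c := by
  obtain ⟨d, hd⟩ := exists_sq_eq_algebraMap_of_trace_eq_zero hquad htr
  constructor
  · rintro ⟨b, hb⟩
    have hd0 : algebraMap F E d ≠ 0 := by rw [← hd]; exact pow_ne_zero 2 hτ
    refine ⟨b / d, mul_left_cancel₀ hτ ?_⟩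
    rw [hb, map_div₀, ← hd]
    field_simp
  · rintro ⟨c, rfl⟩
    exact ⟨d * c, by rw [← mul_assoc, ← sq, hd, map_mul]⟩

end QuadraticExtension

section Coordinates

variable {R : Type*} [CommRing R] {n : ℕ} (k : ℕ)

local notation "V" => (Fin n → R) × (Fin n → R)

def lowPart : (Fin n → R) →ₗ[R] (Fin n → R) where
  toFun v i := if (i : ℕ) < k then v i else 0
  map_add' u v := by ext i; split_ifs <;> simp [*]
  map_smul' c v := by ext i; split_ifs <;> simp [*]

def highPart : (Fin n → R) →ₗ[R] (Fin n → R) where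
  toFun v i := if (i : ℕ) < k then 0 else v i
  map_add' u v := by ext i; split_ifs <;> simp [*]
  map_smul' c v := by ext i; split_ifs <;> simp [*]

def projX : V →ₗ[R] V := (lowPart k).prodMap 0
def projW : V →ₗ[R] V := (highPart k).prodMap (highPart k)
def projY : V →ₗ[R] V := (0 : (Fin n → R) →ₗ[R] (Fin n → R)).prodMap (lowPart k)

def isotropicX : Set V := {p | (∀ i : Fin n, k ≤ (i : ℕ) → p.1 i = 0) ∧ p.2 = 0}
def isotropicY : Set V := {p | p.1 = 0 ∧ ∀ i : Fin n, k ≤ (i : ℕ) → p.2 i = 0}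
def middleSpace : Set V := {p | ∀ i : Fin n, (i : ℕ) < k → (p.1 i = 0 ∧ p.2 i = 0)}
def orthX : Set V := {p | ∀ i : Fin n, (i : ℕ) < k → p.2 i = 0}

/-- The Levi component of `g` when `g` stabilises `X_k` and `X_k^⊥`. -/
def levi (g : V →ₗ[R] V) : V →ₗ[R] V :=
  projX k ∘ₗ g ∘ₗ projX k + projW k ∘ₗ g ∘ₗ projW k + projY k ∘ₗ g ∘ₗ projY k

def sympForm : LinearMap.BilinForm R V :=
  LinearMap.mk₂ R (fun p q => ∑ i, (p.1 i * q.2 i - p.2 i * q.1 i))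
    (fun p p' q => by simp only [← Finset.sum_add_distrib]; congr with i; simp; ring)
    (fun c p q => by simp only [smul_eq_mul, Finset.mul_sum]; congr with i; simp; ring)
    (fun p q q' => by simp only [← Finset.sum_add_distrib]; congr with i; simp; ring)
    (fun c p q => by simp only [smul_eq_mul, Finset.mul_sum]; congr with i; simp; ring)

variable {k}

@[simp] theorem lowPart_apply (v : Fin n → R) (i : Fin n) :
    lowPart k v i = if (i : ℕ) < k then v i else 0 := rfl

@[simp] theorem highPart_apply (v : Fin n → R) (i : Fin n) :
    highPart k v i = if (i : ℕ) < k then 0 else v i := rfl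

@[simp] theorem lowPart_lowPart (v : Fin n → R) : lowPart k (lowPart k v) = lowPart k v := by
  ext i; by_cases h : (i : ℕ) < k <;> simp [h]

@[simp] theorem lowPart_highPart (v : Fin n → R) : lowPart k (highPart k v) = 0 := by
  ext i; by_cases h : (i : ℕ) < k <;> simp [h]

@[simp] theorem highPart_lowPart (v : Fin n → R) : highPart k (lowPart k v) = 0 := by
  ext i; by_cases h : (i : ℕ) < k <;> simp [h]

@[simp] theorem highPart_highPart (v : Fin n → R) :
    highPart k (highPart k v) = highPart k v := by
  ext i; by_cases h : (i : ℕ) < k <;> simp [h]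

@[simp] theorem projX_apply (p : V) : projX k p = (lowPart k p.1, 0) := rfl
@[simp] theorem projW_apply (p : V) : projW k p = (highPart k p.1, highPart k p.2) := rfl
@[simp] theorem projY_apply (p : V) : projY k p = (0, lowPart k p.2) := rfl

theorem projX_add_projW_add_projY (p : V) : projX k p + projW k p + projY k p = p := by
  ext i <;> by_cases h : (i : ℕ) < k <;> simp [h]

theorem eq_of_proj_eq {p q : V} (hX : projX k p = projX k q) (hW : projW k p = projW k q)
    (hY : projY k p = projY k q) : p = q := by
  rw [← projX_add_projW_add_projY (k := k) p, ← projX_add_projW_add_projY (k := k) q,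
    hX, hW, hY]

theorem mem_isotropicX_iff {p : V} : p ∈ isotropicX k ↔ projX k p = p := by
  simp +contextual [isotropicX, Prod.ext_iff, funext_iff, eq_comm]

theorem mem_isotropicY_iff {p : V} : p ∈ isotropicY k ↔ projY k p = p := by
  simp +contextual [isotropicY, Prod.ext_iff, funext_iff, eq_comm]

theorem mem_middleSpace_iff {p : V} : p ∈ middleSpace k ↔ projW k p = p := by
  simp +contextual [middleSpace, Prod.ext_iff, funext_iff, eq_comm, forall_and]

theorem mem_orthX_iff {p : V} : p ∈ orthX k ↔ projY k p = 0 := by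
  simp [orthX, Prod.ext_iff, funext_iff]

theorem sympForm_apply (p q : V) :
    sympForm p q = ∑ i, (p.1 i * q.2 i - p.2 i * q.1 i) := rfl

theorem sympForm_eq_proj (p q : V) :
    sympForm p q = sympForm (projX k p) (projY k q) + sympForm (projY k p) (projX k q)
      + sympForm (projW k p) (projW k q) := by
  simp only [sympForm_apply, ← Finset.sum_add_distrib]
  congr with i
  by_cases h : (i : ℕ) < k <;> simp [h, sub_eq_add_neg]

theorem sympForm_projX_projY (p q : V) :
    sympForm (projX k p) (projY k q) = sympForm (projX k p) q := by
  simp only [sympForm_apply]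
  congr with i
  by_cases h : (i : ℕ) < k <;> simp [h]

theorem sympForm_projY_projX (p q : V) :
    sympForm (projY k p) (projX k q) = sympForm p (projX k q) := by
  simp only [sympForm_apply]
  congr with i
  by_cases h : (i : ℕ) < k <;> simp [h]

theorem forall_sympForm_eq_zero_iff {p : V} :
    (∀ q ∈ isotropicX k, sympForm p q = 0) ↔ p ∈ orthX k := by
  constructor
  · intro h i hi
    have hq : ((Pi.single i 1, 0) : V) ∈ isotropicX k :=
      ⟨fun j hj => Pi.single_eq_of_ne (by rintro rfl; omega) _, rfl⟩
    simpa [sympForm_apply, Pi.single_apply] using h _ hq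
  · intro hp q hq
    rw [← mem_isotropicX_iff.1 hq, ← sympForm_projY_projX, mem_orthX_iff.1 hp, map_zero,
      LinearMap.zero_apply]

theorem projY_eq_zero_of_mem_isotropicX {p : V} (hp : p ∈ isotropicX k) : projY k p = 0 := by
  rw [← mem_isotropicX_iff.1 hp]; simp

theorem projW_eq_zero_of_mem_isotropicX {p : V} (hp : p ∈ isotropicX k) : projW k p = 0 := by
  rw [← mem_isotropicX_iff.1 hp]; simp

theorem projX_mem_isotropicX (p : V) : projX k p ∈ isotropicX k :=
  mem_isotropicX_iff.2 (by simp)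

theorem projW_mem_middleSpace (p : V) : projW k p ∈ middleSpace k :=
  mem_middleSpace_iff.2 (by simp)

theorem projY_mem_isotropicY (p : V) : projY k p ∈ isotropicY k :=
  mem_isotropicY_iff.2 (by simp)

theorem middleSpace_subset_orthX : middleSpace k ⊆ (orthX k : Set V) := fun p hp => by
  rw [mem_orthX_iff, ← mem_middleSpace_iff.1 hp]; simp

theorem sub_projY_mem_orthX (p : V) : p - projY k p ∈ orthX k := by
  rw [mem_orthX_iff]; simp

theorem projX_add_projW_of_mem_orthX {p : V} (hp : p ∈ orthX k) :
    projX k p + projW k p = p := by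
  rw [← add_zero (projX k p + _), ← mem_orthX_iff.1 hp, projX_add_projW_add_projY]

@[simp] theorem projX_levi (g : V →ₗ[R] V) (p : V) :
    projX k (levi k g p) = projX k (g (projX k p)) := by
  simp [levi]

@[simp] theorem projW_levi (g : V →ₗ[R] V) (p : V) :
    projW k (levi k g p) = projW k (g (projW k p)) := by
  simp [levi]

@[simp] theorem projY_levi (g : V →ₗ[R] V) (p : V) :
    projY k (levi k g p) = projY k (g (projY k p)) := by
  simp [levi]

theorem levi_apply_of_mem_isotropicX {g : V →ₗ[R] V}
    (hgX : MapsTo g (isotropicX k) (isotropicX k)) {p : V} (hp : p ∈ isotropicX k) :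
    levi k g p = g p := by
  simp only [levi, LinearMap.add_apply, LinearMap.comp_apply, mem_isotropicX_iff.1 hp,
    projW_eq_zero_of_mem_isotropicX hp, projY_eq_zero_of_mem_isotropicX hp, map_zero, add_zero,
    mem_isotropicX_iff.1 (hgX hp)]

theorem levi_apply_of_mem_middleSpace {g : V →ₗ[R] V} {p : V} (hp : p ∈ middleSpace k) :
    levi k g p = projW k (g p) := by
  rw [← mem_middleSpace_iff.1 hp]; simp [levi, Prod.mk_zero_zero]

theorem levi_apply_of_mem_isotropicY {g : V →ₗ[R] V} {p : V} (hp : p ∈ isotropicY k) :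
    levi k g p = projY k (g p) := by
  rw [← mem_isotropicY_iff.1 hp]; simp [levi, Prod.mk_zero_zero]

theorem sub_levi_apply_of_mem_orthX {g : V →ₗ[R] V}
    (hgX : MapsTo g (isotropicX k) (isotropicX k))
    (hgS : MapsTo g (orthX k) (orthX k)) {p : V} (hp : p ∈ orthX k) :
    g p - levi k g p = projX k (g (projW k p)) := by
  have hgW : g (projW k p) ∈ orthX k := hgS (middleSpace_subset_orthX (projW_mem_middleSpace p))
  have hlevi : levi k g p = g (projX k p) + projW k (g (projW k p)) := by
    simp only [levi, LinearMap.add_apply, LinearMap.comp_apply, mem_orthX_iff.1 hp, map_zero,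
      add_zero, mem_isotropicX_iff.1 (hgX (projX_mem_isotropicX p))]
  have hg : g p = g (projX k p) + (projX k (g (projW k p)) + projW k (g (projW k p))) := by
    rw [projX_add_projW_of_mem_orthX hgW, ← map_add, projX_add_projW_of_mem_orthX hp]
  rw [hlevi, hg]
  abel

theorem smul_mem_isotropicX (c : R) {p : V} (hp : p ∈ isotropicX k) :
    c • p ∈ isotropicX k := by
  rw [mem_isotropicX_iff, map_smul, mem_isotropicX_iff.1 hp]

theorem sympForm_projW_of_mem_orthX {p q : V} (hp : p ∈ orthX k) (hq : q ∈ orthX k) :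
    sympForm (projW k p) (projW k q) = sympForm p q := by
  rw [sympForm_eq_proj (k := k) p q, mem_orthX_iff.1 hp, mem_orthX_iff.1 hq]
  simp

theorem mapsTo_orthX_of_isOrthogonal {g : V ≃ₗ[R] V} (hg : sympForm.IsOrthogonal g)
    (hgX : MapsTo g.symm (isotropicX k) (isotropicX k)) : MapsTo g (orthX k) (orthX k) := by
  intro p hp
  rw [← forall_sympForm_eq_zero_iff] at hp ⊢
  intro q hq
  rw [← g.apply_symm_apply q, hg]
  exact hp _ (hgX hq)

theorem levi_levi {g h : V →ₗ[R] V} (hhg : ∀ p, h (g p) = p)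
    (hgX : MapsTo g (isotropicX k) (isotropicX k)) (hgS : MapsTo g (orthX k) (orthX k))
    (hhX : MapsTo h (isotropicX k) (isotropicX k)) (hhS : MapsTo h (orthX k) (orthX k))
    (p : V) : levi k h (levi k g p) = p := by
  refine eq_of_proj_eq (k := k) ?_ ?_ ?_
  · rw [projX_levi, projX_levi, mem_isotropicX_iff.1 (hgX (projX_mem_isotropicX p)), hhg]
    simp
  · have hgW : g (projW k p) ∈ orthX k :=
      hgS (middleSpace_subset_orthX (projW_mem_middleSpace p))
    rw [projW_levi, projW_levi, eq_sub_of_add_eq' (projX_add_projW_of_mem_orthX hgW), map_sub,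
      hhg, map_sub, projW_eq_zero_of_mem_isotropicX (hhX (projX_mem_isotropicX _)), sub_zero]
    simp
  · rw [projY_levi, projY_levi, ← sub_sub_cancel (g (projY k p)) (projY k (g (projY k p))),
      map_sub, hhg, map_sub, mem_orthX_iff.1 (hhS (sub_projY_mem_orthX _)), sub_zero]
    simp

theorem sympForm_levi {g : V →ₗ[R] V} (hg : sympForm.IsOrthogonal g)
    (hgX : MapsTo g (isotropicX k) (isotropicX k)) (hgS : MapsTo g (orthX k) (orthX k))
    (p q : V) : sympForm (levi k g p) (levi k g q) = sympForm p q := by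
  -- both sides split as `ω(xp, yq) + ω(yp, xq) + ω(wp, wq)` along `V = X ⊕ W ⊕ Y`
  have hgW : ∀ p, g (projW k p) ∈ orthX k :=
    fun p => hgS (middleSpace_subset_orthX (projW_mem_middleSpace p))
  rw [sympForm_eq_proj (k := k) (levi k g p), projX_levi, projY_levi, projY_levi, projX_levi,
    projW_levi, projW_levi, sympForm_projX_projY, sympForm_projY_projX,
    mem_isotropicX_iff.1 (hgX (projX_mem_isotropicX p)),
    mem_isotropicX_iff.1 (hgX (projX_mem_isotropicX q)),
    sympForm_projW_of_mem_orthX (hgW p) (hgW q), hg, hg, hg, ← sympForm_eq_proj]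

def leviEquiv (g : V ≃ₗ[R] V) (hgX : MapsTo g (isotropicX k) (isotropicX k))
    (hgS : MapsTo g (orthX k) (orthX k)) (hgX' : MapsTo g.symm (isotropicX k) (isotropicX k))
    (hgS' : MapsTo g.symm (orthX k) (orthX k)) : V ≃ₗ[R] V :=
  .ofLinearMap (f := levi k g) (g := levi k g.symm)
    (LinearMap.ext <| levi_levi (g := (g.symm : V →ₗ[R] V)) (h := g)
      g.apply_symm_apply hgX' hgS' hgX hgS)
    (LinearMap.ext <| levi_levi (g := (g : V →ₗ[R] V)) (h := g.symm)
      g.symm_apply_apply hgX hgS hgX' hgS')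

end Coordinates

section Lagrangian

variable {F E : Type*} [Field F] [Field E] [Algebra F E] {n : ℕ}

local notation "V" => (Fin n → E) × (Fin n → E)

variable (F) in
def lagrangianL (τ : E) (k : ℕ) : Submodule F V where
  carrier := {p | (∀ i : Fin n, (i : ℕ) < k → p.2 i = 0) ∧ ∀ i : Fin n, k ≤ (i : ℕ) →
    ((∃ a : F, p.1 i = algebraMap F E a) ∧ (∃ b : F, p.2 i = τ * algebraMap F E b))}
  add_mem' := by
    rintro p q ⟨hp, hp'⟩ ⟨hq, hq'⟩
    refine ⟨fun i hi => by simp [hp i hi, hq i hi], fun i hi => ?_⟩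
    obtain ⟨⟨a, ha⟩, ⟨b, hb⟩⟩ := hp' i hi
    obtain ⟨⟨a', ha'⟩, ⟨b', hb'⟩⟩ := hq' i hi
    exact ⟨⟨a + a', by simp [ha, ha']⟩, ⟨b + b', by simp [hb, hb', mul_add]⟩⟩
  zero_mem' := ⟨fun _ _ => rfl, fun _ _ => ⟨⟨0, by simp⟩, ⟨0, by simp⟩⟩⟩
  smul_mem' := by
    rintro c p ⟨hp, hp'⟩
    refine ⟨fun i hi => by simp [hp i hi], fun i hi => ?_⟩
    obtain ⟨⟨a, ha⟩, ⟨b, hb⟩⟩ := hp' i hi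
    exact ⟨⟨c * a, by simp [ha, Algebra.smul_def]⟩,
      ⟨c * b, by simp [hb, Algebra.smul_def]; ring⟩⟩

variable (F) in
def twistedMiddle (τ : E) (k : ℕ) : Set V :=
  {p | p ∈ middleSpace k ∧ ∀ i : Fin n, k ≤ (i : ℕ) →
    ((∃ a : F, p.1 i = τ * algebraMap F E a) ∧ (∃ b : F, p.2 i = algebraMap F E b))}

variable {τ : E} {k : ℕ}

local notation "𝓛" => ((lagrangianL F τ k : Submodule F V) : Set V)

theorem isotropicX_subset_lagrangianL : isotropicX k ⊆ 𝓛 :=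
  fun _ ⟨hp, hp'⟩ => ⟨fun _ _ => by simp [hp'],
    fun i hi => ⟨⟨0, by simp [hp i hi]⟩, ⟨0, by simp [hp']⟩⟩⟩

theorem lagrangianL_subset_orthX : 𝓛 ⊆ orthX k := fun _ hp => hp.1

theorem projW_mem_lagrangianL {p : V} (hp : p ∈ lagrangianL F τ k) :
    projW k p ∈ lagrangianL F τ k := by
  refine ⟨fun i hi => by simp [hi], fun i hi => ?_⟩
  simpa [not_lt.2 hi] using hp.2 i hi

theorem mem_isotropicX_of_smul_mem [CharZero F] (hquad : finrank F E = 2) (hτ : τ ≠ 0)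
    (htr : Algebra.trace F E τ = 0) {p : V} (hp : p ∈ lagrangianL F τ k)
    (hτp : τ • p ∈ lagrangianL F τ k) : p ∈ isotropicX k := by
  refine ⟨fun i hi => ?_, funext fun i => ?_⟩
  · obtain ⟨a, ha⟩ := (hp.2 i hi).1
    obtain ⟨a', ha'⟩ := (hτp.2 i hi).1
    rw [Prod.smul_fst, Pi.smul_apply, smul_eq_mul, ha] at ha'
    rw [ha, eq_zero_of_mul_algebraMap_eq_algebraMap hquad hτ htr ha', map_zero]
  · by_cases hi : (i : ℕ) < k
    · exact hp.1 i hi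
    obtain ⟨b, hb⟩ := (hp.2 i (not_lt.1 hi)).2
    obtain ⟨b', hb'⟩ := (hτp.2 i (not_lt.1 hi)).2
    rw [Prod.smul_snd, Pi.smul_apply, smul_eq_mul, hb, mul_right_inj' hτ] at hb'
    rw [Pi.zero_apply, hb, eq_zero_of_mul_algebraMap_eq_algebraMap hquad hτ htr hb', map_zero,
      mul_zero]

theorem smul_mem_twistedMiddle_iff (hquad : finrank F E = 2) (hτ : τ ≠ 0)
    (htr : Algebra.trace F E τ = 0) {p : V} :
    τ • p ∈ twistedMiddle F τ k ↔ p ∈ middleSpace k ∧ p ∈ lagrangianL F τ k := by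
  simp only [twistedMiddle, middleSpace, lagrangianL, mem_ofPred_eq, Submodule.mem_mk,
    AddSubmonoid.mem_mk, AddSubsemigroup.mem_mk, Prod.smul_fst, Prod.smul_snd, Pi.smul_apply,
    smul_eq_mul, mul_eq_zero, hτ, false_or, mul_right_inj' hτ,
    exists_mul_eq_algebraMap_iff hquad hτ htr]
  exact ⟨fun ⟨hW, h⟩ => ⟨hW, fun i hi => (hW i hi).2, h⟩, fun ⟨hW, _, h⟩ => ⟨hW, h⟩⟩

theorem mapsTo_isotropicX_of_mapsTo_lagrangianL [CharZero F] (hquad : finrank F E = 2) (hτ : τ ≠ 0)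
    (htr : Algebra.trace F E τ = 0) {g : V →ₗ[E] V} (hgL : MapsTo g 𝓛 𝓛) :
    MapsTo g (isotropicX k) (isotropicX k) := fun p hp =>
  mem_isotropicX_of_smul_mem hquad hτ htr (hgL (isotropicX_subset_lagrangianL hp))
    (by rw [← map_smul]; exact hgL (isotropicX_subset_lagrangianL (smul_mem_isotropicX τ hp)))

theorem mapsTo_twistedMiddle_levi (hquad : finrank F E = 2) (hτ : τ ≠ 0)
    (htr : Algebra.trace F E τ = 0) {g : V →ₗ[E] V} (hgL : MapsTo g 𝓛 𝓛) :
    MapsTo (levi k g) (twistedMiddle F τ k) (twistedMiddle F τ k) := by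
  intro p hp
  rw [← smul_inv_smul₀ hτ p] at hp ⊢
  obtain ⟨hW, hL⟩ := (smul_mem_twistedMiddle_iff hquad hτ htr).1 hp
  rw [map_smul, levi_apply_of_mem_middleSpace hW]
  exact (smul_mem_twistedMiddle_iff hquad hτ htr).2
    ⟨projW_mem_middleSpace _, projW_mem_lagrangianL (hgL hL)⟩

theorem mapsTo_lagrangianL_of_mapsTo_twistedMiddle (hquad : finrank F E = 2) (hτ : τ ≠ 0)
    (htr : Algebra.trace F E τ = 0) {m : V →ₗ[E] V}
    (hmX : MapsTo m (isotropicX k) (isotropicX k))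
    (hmC : MapsTo m (twistedMiddle F τ k) (twistedMiddle F τ k)) :
    MapsTo m 𝓛 𝓛 := by
  intro p hp
  rw [← projX_add_projW_of_mem_orthX (lagrangianL_subset_orthX hp), map_add]
  refine add_mem (isotropicX_subset_lagrangianL (hmX (projX_mem_isotropicX p))) ?_
  have hC := hmC ((smul_mem_twistedMiddle_iff hquad hτ htr).2
    ⟨projW_mem_middleSpace p, projW_mem_lagrangianL hp⟩)
  rw [map_smul] at hC
  exact ((smul_mem_twistedMiddle_iff hquad hτ htr).1 hC).2

theorem mapsTo_lagrangianL_of_unipotent {u : V → V}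
    (hu : ∀ p, (∀ q ∈ isotropicX k, sympForm p q = 0) → u p - p ∈ isotropicX k) :
    MapsTo u 𝓛 𝓛 := by
  intro p hp
  rw [← add_sub_cancel p (u p)]
  exact add_mem hp (isotropicX_subset_lagrangianL
    (hu p (forall_sympForm_eq_zero_iff.2 (lagrangianL_subset_orthX hp))))

theorem exists_levi_mul_unipotent [CharZero F] (hquad : finrank F E = 2) (hτ : τ ≠ 0)
    (htr : Algebra.trace F E τ = 0) {g : V ≃ₗ[E] V} (hg : sympForm.IsOrthogonal g)
    (hgL : MapsTo g 𝓛 𝓛) (hgL' : MapsTo g.symm 𝓛 𝓛) :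
    ∃ m u : V ≃ₗ[E] V, sympForm.IsOrthogonal m ∧ sympForm.IsOrthogonal u ∧
      (∀ p, g p = m (u p)) ∧
      (MapsTo m (isotropicX k) (isotropicX k) ∧ MapsTo m (isotropicY k) (isotropicY k) ∧
        MapsTo m (middleSpace k) (middleSpace k) ∧
        MapsTo m (twistedMiddle F τ k) (twistedMiddle F τ k)) ∧
      ((∀ p ∈ isotropicX k, u p = p) ∧
        ∀ p, (∀ q ∈ isotropicX k, sympForm p q = 0) → u p - p ∈ isotropicX k) := by
  have hgX := mapsTo_isotropicX_of_mapsTo_lagrangianL hquad hτ htr (g := (g : V →ₗ[E] V)) hgL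
  have hgX' := mapsTo_isotropicX_of_mapsTo_lagrangianL hquad hτ htr (g := (g.symm : V →ₗ[E] V)) hgL'
  have hgS := mapsTo_orthX_of_isOrthogonal hg hgX'
  have hgS' := mapsTo_orthX_of_isOrthogonal hg.symm hgX
  let m := leviEquiv g hgX hgS hgX' hgS'
  have hmX : ∀ p ∈ isotropicX k, m p = g p := fun p hp => levi_apply_of_mem_isotropicX hgX hp
  refine ⟨m, g.trans m.symm, sympForm_levi hg hgX hgS, fun p q => ?_,
    fun p => (m.apply_symm_apply _).symm, ⟨fun p hp => ?_, fun p hp => ?_, fun p hp => ?_,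
    mapsTo_twistedMiddle_levi hquad hτ htr hgL⟩, fun p hp => ?_, fun p hp => ?_⟩
  · exact (sympForm_levi hg.symm hgX' hgS' _ _).trans (hg p q)
  · rw [hmX p hp]
    exact hgX hp
  · rw [show m p = levi k g p from rfl, levi_apply_of_mem_isotropicY hp]
    exact projY_mem_isotropicY _
  · rw [show m p = levi k g p from rfl, levi_apply_of_mem_middleSpace hp]
    exact projW_mem_middleSpace _
  · rw [LinearEquiv.trans_apply, ← hmX p hp, m.symm_apply_apply]
  · have hu : (g.trans m.symm) p - p = levi k g.symm ((g : V →ₗ[E] V) p - levi k g p) := by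
      rw [map_sub]
      exact congrArg ((g.trans m.symm) p - ·) (m.symm_apply_apply p).symm
    rw [hu, sub_levi_apply_of_mem_orthX hgX hgS (forall_sympForm_eq_zero_iff.1 hp),
      levi_apply_of_mem_isotropicX hgX' (projX_mem_isotropicX _)]
    exact hgX' (projX_mem_isotropicX _)

end Lagrangian

theorem stmt11_general
    (F E : Type*) [Field F] [Field E] [Algebra F E] [CharZero F]
    (hquad : Module.finrank F E = 2)
    (τ : E) (hτ : τ ≠ 0) (htr : Algebra.trace F E τ = 0)
    (n k : ℕ)
    (ω : ((Fin n → E) × (Fin n → E)) → ((Fin n → E) × (Fin n → E)) → E)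
    (hω : ∀ p r, ω p r = ∑ i : Fin n, (p.1 i * r.2 i - p.2 i * r.1 i))
    (Lk Xk Yk W' cτWF : Set ((Fin n → E) × (Fin n → E)))
    (hLk : Lk = {p | (∀ i : Fin n, (i : ℕ) < k → p.2 i = 0) ∧
      ∀ i : Fin n, k ≤ (i : ℕ) →
        ((∃ a : F, p.1 i = algebraMap F E a) ∧ (∃ b : F, p.2 i = τ * algebraMap F E b))})
    (hXk : Xk = {p | (∀ i : Fin n, k ≤ (i : ℕ) → p.1 i = 0) ∧ p.2 = 0})
    (hYk : Yk = {p | p.1 = 0 ∧ ∀ i : Fin n, k ≤ (i : ℕ) → p.2 i = 0})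
    (hW' : W' = {p | ∀ i : Fin n, (i : ℕ) < k → (p.1 i = 0 ∧ p.2 i = 0)})
    (hcτWF : cτWF = {p | p ∈ W' ∧ ∀ i : Fin n, k ≤ (i : ℕ) →
      ((∃ a : F, p.1 i = τ * algebraMap F E a) ∧ (∃ b : F, p.2 i = algebraMap F E b))}) :
    ∀ g : ((Fin n → E) × (Fin n → E)) ≃ₗ[E] ((Fin n → E) × (Fin n → E)),
      (∀ p r, ω (g p) (g r) = ω p r) →
      (((∀ p ∈ Lk, g p ∈ Lk) ∧ (∀ p ∈ Lk, g.symm p ∈ Lk)) ↔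
        ∃ m u : ((Fin n → E) × (Fin n → E)) ≃ₗ[E] ((Fin n → E) × (Fin n → E)),
          (∀ p r, ω (m p) (m r) = ω p r) ∧ (∀ p r, ω (u p) (u r) = ω p r) ∧
          (∀ p, g p = m (u p)) ∧
          -- m lies in the Levi subgroup GL(X_k) × Sp(W_{2n-2k,F})^τ
          ((∀ p ∈ Xk, m p ∈ Xk) ∧ (∀ p ∈ Yk, m p ∈ Yk) ∧ (∀ p ∈ W', m p ∈ W') ∧
            (∀ p ∈ cτWF, m p ∈ cτWF)) ∧
          -- u lies in the unipotent radical N of Stab(X_k)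
          ((∀ p ∈ Xk, u p = p) ∧
            (∀ p, (∀ r ∈ Xk, ω p r = 0) → u p - p ∈ Xk))) := by
  obtain rfl : ω = fun p q => sympForm p q := funext₂ hω
  obtain rfl : Lk = lagrangianL (n := n) F τ k := hLk
  obtain rfl : Xk = isotropicX k := hXk
  obtain rfl : Yk = isotropicY k := hYk
  obtain rfl : W' = middleSpace k := hW'
  obtain rfl : cτWF = twistedMiddle F τ k := hcτWF
  intro g hg
  constructor
  · rintro ⟨hgL, hgL'⟩
    exact exists_levi_mul_unipotent hquad hτ htr hg hgL hgL'
  · rintro ⟨m, u, -, -, hgmu, ⟨hmX, -, -, hmC⟩, -, hu⟩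
    have hgL : MapsTo g (lagrangianL (n := n) F τ k) (lagrangianL (n := n) F τ k) := by
      intro p hp
      rw [hgmu]
      exact mapsTo_lagrangianL_of_mapsTo_twistedMiddle (m := m.toLinearMap) hquad hτ htr hmX hmC
        (mapsTo_lagrangianL_of_unipotent hu hp)
    have : FiniteDimensional F E := .of_finrank_eq_succ hquad
    exact ⟨hgL, (g.restrictScalars F).mapsTo_symm_of_mapsTo hgL⟩

/-- In the doubled symplectic space, the stabilizer in `Sp(W)` of the
Lagrangian `L_k = X_k ⊕ X'_{F,n−k} ⊕ τ Y'_{F,n−k}` equals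
`(GL(X_k) × Sp(W_{2n−2k,F})^τ) ⋉ N`: a symplectic automorphism `g` stabilizes `L_k`
iff `g = m·u` where `u` lies in the unipotent radical `N` of `Stab(X_k)` and `m` is a
Levi element stabilizing `X_k`, `Y_k`, `W_{2n−2k}` and the `τ`-conjugated rational form
`c_τ(W_{2n−2k,F}) = τX'_{F} ⊕ Y'_{F}`. -/
theorem stmt11
    (F E : Type*) [Field F] [Field E] [Algebra F E] [CharZero F]
    (hquad : Module.finrank F E = 2)
    (τ : E) (hτ : τ ≠ 0) (htr : Algebra.trace F E τ = 0)
    (n k : ℕ) (hk : k ≤ n)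
    (ω : ((Fin n → E) × (Fin n → E)) → ((Fin n → E) × (Fin n → E)) → E)
    (hω : ∀ p r, ω p r = ∑ i : Fin n, (p.1 i * r.2 i - p.2 i * r.1 i))
    (Lk Xk Yk W' cτWF : Set ((Fin n → E) × (Fin n → E)))
    (hLk : Lk = {p | (∀ i : Fin n, (i : ℕ) < k → p.2 i = 0) ∧
      ∀ i : Fin n, k ≤ (i : ℕ) →
        ((∃ a : F, p.1 i = algebraMap F E a) ∧ (∃ b : F, p.2 i = τ * algebraMap F E b))})
    (hXk : Xk = {p | (∀ i : Fin n, k ≤ (i : ℕ) → p.1 i = 0) ∧ p.2 = 0})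
    (hYk : Yk = {p | p.1 = 0 ∧ ∀ i : Fin n, k ≤ (i : ℕ) → p.2 i = 0})
    (hW' : W' = {p | ∀ i : Fin n, (i : ℕ) < k → (p.1 i = 0 ∧ p.2 i = 0)})
    (hcτWF : cτWF = {p | p ∈ W' ∧ ∀ i : Fin n, k ≤ (i : ℕ) →
      ((∃ a : F, p.1 i = τ * algebraMap F E a) ∧ (∃ b : F, p.2 i = algebraMap F E b))}) :
    ∀ g : ((Fin n → E) × (Fin n → E)) ≃ₗ[E] ((Fin n → E) × (Fin n → E)),
      (∀ p r, ω (g p) (g r) = ω p r) →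
      (((∀ p ∈ Lk, g p ∈ Lk) ∧ (∀ p ∈ Lk, g.symm p ∈ Lk)) ↔
        ∃ m u : ((Fin n → E) × (Fin n → E)) ≃ₗ[E] ((Fin n → E) × (Fin n → E)),
          (∀ p r, ω (m p) (m r) = ω p r) ∧ (∀ p r, ω (u p) (u r) = ω p r) ∧
          (∀ p, g p = m (u p)) ∧
          -- m lies in the Levi subgroup GL(X_k) × Sp(W_{2n-2k,F})^τ
          ((∀ p ∈ Xk, m p ∈ Xk) ∧ (∀ p ∈ Yk, m p ∈ Yk) ∧ (∀ p ∈ W', m p ∈ W') ∧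
            (∀ p ∈ cτWF, m p ∈ cτWF)) ∧
          -- u lies in the unipotent radical N of Stab(X_k)
          ((∀ p ∈ Xk, u p = p) ∧
            (∀ p, (∀ r ∈ Xk, ω p r = 0) → u p - p ∈ Xk))) :=
  stmt11_general F E hquad τ hτ htr n k ω hω Lk Xk Yk W' cτWF hLk hXk hYk hW' hcτWF
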